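/- Let G ⊆ K_{m,n} be a connected bipartite graph, let a ∈ U₁ with A = U₁ ∖ {a} a first independent set, and let C = C₁ ⊔ C₂ be a two-sided first independent set of G. Then the intersection subgraph G{A} ∩ G{C} (the spanning subgraph whose edges are the common edges of G{A} and G{C}) has exactly three connected components (isolated vertices counting as components) — equivalently, the corresponding pair of extremal rays spans a two-dimensional face of the edge cone — if and only if one of the following holds: (1) C₁ = {a} and C₂ = U₂ ∖ {v} for some vertex v ∈ U₂; (2) C₁ ⊆ U₁ ∖ {a} and the induced subgraph G[C₂ ⊔ (N(C₂) ∖ {a})] is connected; (3) N(C₂) ⊆ U₁ ∖ {a} and the induced subgraph G[(C₁ ∖ {a}) ⊔ N(C₁)] is connected. -/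

import Mathlib

/-!
Common setup: a bipartite graph `G ⊆ K_{m,n}` is encoded by an edge relation
`E : Fin m → Fin n → Prop` (vertex set `V = Fin m ⊕ Fin n`, with `U₁` the left
summand and `U₂` the right summand).
-/

namespace ToricBipartite

open Sum Finset

variable {m n : ℕ}

/-- The simple graph on `Fin m ⊕ Fin n` determined by the bipartite edge relation `E`. -/
def toGraph (E : Fin m → Fin n → Prop) : SimpleGraph (Fin m ⊕ Fin n) where
  Adj u v :=
    (∃ i j, u = inl i ∧ v = inr j ∧ E i j) ∨ (∃ i j, u = inr j ∧ v = inl i ∧ E i j)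
  symm := by
    constructor
    rintro u v (⟨i, j, hu, hv, h⟩ | ⟨i, j, hu, hv, h⟩)
    · exact Or.inr ⟨i, j, hv, hu, h⟩
    · exact Or.inl ⟨i, j, hv, hu, h⟩
  loopless := by
    constructor
    rintro u (⟨i, j, hu, hv, h⟩ | ⟨i, j, hu, hv, h⟩) <;> rw [hu] at hv <;> simp at hv

/-- The generator `e^i + f^j` of the dual edge cone. -/
def gen (i : Fin m) (j : Fin n) : (Fin m ⊕ Fin n) → ℝ :=
  Pi.single (inl i) 1 + Pi.single (inr j) 1

/-- The set of generators `{e^i + f^j : (i, m+j) ∈ E(G)}` of the dual edge cone. -/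
def genSet (E : Fin m → Fin n → Prop) : Set ((Fin m ⊕ Fin n) → ℝ) :=
  {x | ∃ i j, E i j ∧ x = gen i j}

/-- The dual edge cone `σ_G^∨ ⊆ ℝ^{m+n}`: all nonnegative combinations of the
generators `e^i + f^j` over the edges of `G`. -/
def dualEdgeCone (E : Fin m → Fin n → Prop) : Set ((Fin m ⊕ Fin n) → ℝ) :=
  {x | ∃ c : Fin m → Fin n → ℝ, (∀ i j, 0 ≤ c i j) ∧ (∀ i j, c i j ≠ 0 → E i j) ∧
      x = ∑ i, ∑ j, c i j • gen i j}

/-- The neighbour set `N(A) ⊆ U₂` of a set `A ⊆ U₁`. -/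
def nbrR (E : Fin m → Fin n → Prop) [∀ i j, Decidable (E i j)]
    (A : Finset (Fin m)) : Finset (Fin n) :=
  univ.filter fun j => ∃ i ∈ A, E i j

/-- The neighbour set `N(B) ⊆ U₁` of a set `B ⊆ U₂`. -/
def nbrL (E : Fin m → Fin n → Prop) [∀ i j, Decidable (E i j)]
    (B : Finset (Fin n)) : Finset (Fin m) :=
  univ.filter fun i => ∃ j ∈ B, E i j

/-- `A₁ ⊔ A₂ ⊆ U₁ ⊔ U₂` contains no pair of adjacent vertices (since the graph is
bipartite this says there is no edge between `A₁` and `A₂`). -/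
def IsIndepPair (E : Fin m → Fin n → Prop)
    (A₁ : Finset (Fin m)) (A₂ : Finset (Fin n)) : Prop :=
  ∀ i ∈ A₁, ∀ j ∈ A₂, ¬ E i j

/-- A two-sided independent set `B₁ ⊔ B₂`, with `∅ ≠ B₁ ⊊ U₁` and `∅ ≠ B₂ ⊊ U₂`. -/
def TwoSidedIndep (E : Fin m → Fin n → Prop)
    (B₁ : Finset (Fin m)) (B₂ : Finset (Fin n)) : Prop :=
  B₁.Nonempty ∧ B₁ ≠ univ ∧ B₂.Nonempty ∧ B₂ ≠ univ ∧ IsIndepPair E B₁ B₂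

/-- A two-sided *maximal* independent set: two-sided independent, and contained in no
strictly larger independent set of the graph. -/
def TwoSidedMaxIndep (E : Fin m → Fin n → Prop)
    (A₁ : Finset (Fin m)) (A₂ : Finset (Fin n)) : Prop :=
  TwoSidedIndep E A₁ A₂ ∧
    ∀ B₁ B₂, IsIndepPair E B₁ B₂ → A₁ ⊆ B₁ → A₂ ⊆ B₂ → B₁ = A₁ ∧ B₂ = A₂

/-- Membership in `I_G^(*)`: either a two-sided maximal independent set, or a one-sided
independent set of the form `U_i ∖ {v}` not contained in any two-sided independent set.
A set is encoded as the pair of its parts `(A₁, A₂) = (A ∩ U₁, A ∩ U₂)`. -/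
def InIStar (E : Fin m → Fin n → Prop)
    (A₁ : Finset (Fin m)) (A₂ : Finset (Fin n)) : Prop :=
  TwoSidedMaxIndep E A₁ A₂ ∨
    (A₂ = ∅ ∧ A₁.Nonempty ∧ (∃ v, A₁ = {v}ᶜ) ∧
      ¬ ∃ B₁ B₂, TwoSidedIndep E B₁ B₂ ∧ A₁ ⊆ B₁) ∨
    (A₁ = ∅ ∧ A₂.Nonempty ∧ (∃ v, A₂ = {v}ᶜ) ∧
      ¬ ∃ B₁ B₂, TwoSidedIndep E B₁ B₂ ∧ A₂ ⊆ B₂)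

/-- The edge relation of the associated (spanning) subgraph `G{A}` of `A ∈ I_G^(*)`:
for one-sided `A = A₁ ⊆ U₁` the edges of `G[A₁ ⊔ N(A₁)] ⊔ G[(U₁∖A₁) ⊔ (U₂∖N(A₁))]`,
symmetrically for one-sided `A = A₂ ⊆ U₂`, and for two-sided `A = A₁ ⊔ A₂` the edges of
`G[A₁ ⊔ N(A₁)] ⊔ G[A₂ ⊔ N(A₂)]`. -/
def assoc (E : Fin m → Fin n → Prop) [∀ i j, Decidable (E i j)]
    (A₁ : Finset (Fin m)) (A₂ : Finset (Fin n)) : Fin m → Fin n → Prop := fun i j =>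
  E i j ∧
    (if A₂ = ∅ then i ∈ A₁ ∨ j ∉ nbrR E A₁
     else if A₁ = ∅ then j ∈ A₂ ∨ i ∉ nbrL E A₂
     else i ∈ A₁ ∨ j ∈ A₂)

instance (E : Fin m → Fin n → Prop) [∀ i j, Decidable (E i j)]
    (A₁ : Finset (Fin m)) (A₂ : Finset (Fin n)) (i : Fin m) (j : Fin n) :
    Decidable (assoc E A₁ A₂ i j) := by
  unfold assoc; infer_instance

/-- The number of connected components of the bipartite graph with edge relation `E`
(isolated vertices count as connected components). -/
noncomputable def numComponents (E : Fin m → Fin n → Prop) : ℕ :=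
  Nat.card (toGraph E).ConnectedComponent

/-- `A ∈ I_G^(1)`: a first independent set, i.e. an element of `I_G^(*)` whose associated
subgraph `G{A}` has exactly two connected components. -/
def FirstIndep (E : Fin m → Fin n → Prop) [∀ i j, Decidable (E i j)]
    (A₁ : Finset (Fin m)) (A₂ : Finset (Fin n)) : Prop :=
  InIStar E A₁ A₂ ∧ numComponents (assoc E A₁ A₂) = 2

/-- The supporting hyperplane `H_{A₁}` of a one-sided set `A₁ ⊆ U₁`:
`Σ_{v ∈ A₁} x_v = Σ_{v ∈ N(A₁)} x_v`. -/
def hyp1 (E : Fin m → Fin n → Prop) [∀ i j, Decidable (E i j)]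
    (A₁ : Finset (Fin m)) : Set ((Fin m ⊕ Fin n) → ℝ) :=
  {x | ∑ i ∈ A₁, x (inl i) = ∑ j ∈ nbrR E A₁, x (inr j)}

/-- The supporting hyperplane `H_{A₂}` of a one-sided set `A₂ ⊆ U₂`. -/
def hyp2 (E : Fin m → Fin n → Prop) [∀ i j, Decidable (E i j)]
    (A₂ : Finset (Fin n)) : Set ((Fin m ⊕ Fin n) → ℝ) :=
  {x | ∑ j ∈ A₂, x (inr j) = ∑ i ∈ nbrL E A₂, x (inl i)}

/-- The supporting hyperplane `H_A` of `A = A₁ ⊔ A₂`, taken with respect to a nonempty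
one-sided part of `A`. -/
def hypA (E : Fin m → Fin n → Prop) [∀ i j, Decidable (E i j)]
    (A₁ : Finset (Fin m)) (A₂ : Finset (Fin n)) : Set ((Fin m ⊕ Fin n) → ℝ) :=
  if A₁ = ∅ then hyp2 E A₂ else hyp1 E A₁

/-- Connectivity of the induced subgraph `G[S ⊔ T]` for `S ⊆ U₁`, `T ⊆ U₂`. -/
def InducedConnected (E : Fin m → Fin n → Prop)
    (S : Finset (Fin m)) (T : Finset (Fin n)) : Prop :=
  ((toGraph E).induce
    ((inl '' (S : Set (Fin m)) ∪ inr '' (T : Set (Fin n))) : Set (Fin m ⊕ Fin n))).Connected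

/-- The degree (valency) sequence of the bipartite graph with edge relation `E`,
as a vector in `ℝ^{m+n}`. -/
def valVec (E : Fin m → Fin n → Prop) [∀ i j, Decidable (E i j)] :
    (Fin m ⊕ Fin n) → ℝ :=
  Sum.elim (fun i => ((univ.filter fun j => E i j).card : ℝ))
    (fun j => ((univ.filter fun i => E i j).card : ℝ))

end ToricBipartite

/-!
Maximality of `C₁ ⊔ C₂` gives `N(C₁) = U₂ ∖ C₂` and `N(C₂) = U₁ ∖ C₁`, and since `U₁ ∖ {a}` lies
in no two-sided independent set, `N(U₁ ∖ {a}) = U₂`. So `G{C}` is `G` minus the edges between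
`U₁ ∖ C₁` and `U₂ ∖ C₂`, with components `C₁ ⊔ (U₂ ∖ C₂)` and `(U₁ ∖ C₁) ⊔ C₂`, and
`G{A} ∩ G{C}` is `G{C}` with `a` isolated. It has three components exactly when the side of
`G{C}` containing `a` stays connected after deleting `a`: for `a ∉ C₁` this is (2), for `a ∈ C₁`
it is (3), which holds in particular in the degenerate case (1) where that side is a single
vertex.
-/

namespace SimpleGraph

variable {V ι : Type*} {G : SimpleGraph V} {f : V → ι}

theorem connected_iff_card_connectedComponent_eq_one :
    G.Connected ↔ Nat.card G.ConnectedComponent = 1 := by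
  rw [Nat.card_eq_one_iff_unique, connected_iff]
  refine and_congr ⟨Preconnected.subsingleton_connectedComponent, fun h u v => ?_⟩
    ⟨Nonempty.map G.connectedComponentMk, fun ⟨c⟩ => c.nonempty_supp.to_subtype.map (↑)⟩
  exact ConnectedComponent.exact (Subsingleton.elim _ _)

theorem Reachable.apply_eq_of_adj (hf : ∀ u v, G.Adj u v → f u = f v) {u v : V}
    (h : G.Reachable u v) : f u = f v := by
  obtain ⟨p⟩ := h
  induction p with
  | nil => rfl
  | cons hadj _ ih => exact (hf _ _ hadj).trans ih

theorem Reachable.induce_fiber (hf : ∀ u v, G.Adj u v → f u = f v) {u v : V} {i : ι}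
    (h : G.Reachable u v) (hu : f u = i) :
    (G.induce (f ⁻¹' {i})).Reachable ⟨u, hu⟩ ⟨v, (h.apply_eq_of_adj hf).symm.trans hu⟩ := by
  classical
  obtain ⟨p⟩ := h
  exact ⟨p.induce _ fun x hx =>
    ((p.takeUntil x hx).reachable.apply_eq_of_adj hf).symm.trans hu⟩

theorem card_connectedComponent_eq_sum_fiber [Fintype ι] [Finite V]
    (hf : ∀ u v, G.Adj u v → f u = f v) :
    Nat.card G.ConnectedComponent =
      ∑ i, Nat.card (G.induce (f ⁻¹' {i})).ConnectedComponent := by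
  rw [← Nat.card_sigma]
  refine (Nat.card_congr (Equiv.ofBijective
    (fun c => c.2.map (Embedding.induce (f ⁻¹' {c.1})).toHom) ⟨?_, ?_⟩)).symm
  · rintro ⟨i, c⟩ ⟨i', c'⟩ h
    induction c using ConnectedComponent.ind with | h u => ?_
    induction c' using ConnectedComponent.ind with | h v => ?_
    obtain ⟨u, hu : f u = i⟩ := u
    obtain ⟨v, rfl : f v = i'⟩ := v
    have huv : G.Reachable u v := ConnectedComponent.exact h
    obtain rfl := hu.symm.trans (huv.apply_eq_of_adj hf)
    exact Sigma.ext rfl (heq_of_eq (ConnectedComponent.sound (huv.induce_fiber hf hu)))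
  · intro c
    induction c using ConnectedComponent.ind with | h v => ?_
    exact ⟨⟨f v, connectedComponentMk _ ⟨v, rfl⟩⟩, rfl⟩

theorem card_connectedComponent_eq_card_iff [Fintype ι] [Finite V]
    (hf : ∀ u v, G.Adj u v → f u = f v) (hsurj : Function.Surjective f) :
    Nat.card G.ConnectedComponent = Fintype.card ι ↔
      ∀ i, (G.induce (f ⁻¹' {i})).Connected := by
  have hpos : ∀ i, 1 ≤ Nat.card (G.induce (f ⁻¹' {i})).ConnectedComponent := fun i => by
    obtain ⟨v, rfl⟩ := hsurj i
    have : Nonempty (f ⁻¹' {f v}) := ⟨⟨v, rfl⟩⟩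
    exact Nat.one_le_iff_ne_zero.mpr Nat.card_pos.ne'
  simp_rw [card_connectedComponent_eq_sum_fiber hf, Fintype.card_eq_sum_ones,
    connected_iff_card_connectedComponent_eq_one]
  rw [eq_comm, Finset.sum_eq_sum_iff_of_le fun i _ => hpos i]
  simp only [Finset.mem_univ, true_implies, eq_comm]

end SimpleGraph

namespace ToricBipartite

open Sum Finset SimpleGraph

variable {m n : ℕ} {E : Fin m → Fin n → Prop}

@[simp]
theorem toGraph_adj_inl_inr {i : Fin m} {j : Fin n} :
    (toGraph E).Adj (inl i) (inr j) ↔ E i j := by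
  simp [toGraph]

@[simp]
theorem toGraph_adj_inr_inl {i : Fin m} {j : Fin n} :
    (toGraph E).Adj (inr j) (inl i) ↔ E i j := by
  simp [toGraph]

@[simp]
theorem not_toGraph_adj_inl_inl {i i' : Fin m} : ¬ (toGraph E).Adj (inl i) (inl i') := by
  simp [toGraph]

@[simp]
theorem not_toGraph_adj_inr_inr {j j' : Fin n} : ¬ (toGraph E).Adj (inr j) (inr j') := by
  simp [toGraph]

theorem inducedConnected_singleton_empty (a : Fin m) : InducedConnected E {a} ∅ := by
  rw [InducedConnected, Finset.coe_singleton, Finset.coe_empty, Set.image_singleton,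
    Set.image_empty, Set.union_empty, induce_singleton_eq_top]
  exact connected_top

theorem inducedConnected_empty_singleton (v : Fin n) : InducedConnected E ∅ {v} := by
  rw [InducedConnected, Finset.coe_singleton, Finset.coe_empty, Set.image_singleton,
    Set.image_empty, Set.empty_union, induce_singleton_eq_top]
  exact connected_top

theorem numComponents_eq_iff_forall_inducedConnected {E' : Fin m → Fin n → Prop} {k : ℕ}
    (g : Fin m → Fin k) (h : Fin n → Fin k) (hE' : ∀ i j, E' i j → g i = h j)
    (hagree : ∀ i j, g i = h j → (E' i j ↔ E i j))
    (hsurj : ∀ l, (∃ i, g i = l) ∨ ∃ j, h j = l) :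
    numComponents E' = k ↔
      ∀ l, InducedConnected E (univ.filter (g · = l)) (univ.filter (h · = l)) := by
  have hf : ∀ u v, (toGraph E').Adj u v → Sum.elim g h u = Sum.elim g h v := by
    rintro (i | j) (i' | j') huv <;>
      simp only [toGraph_adj_inl_inr, toGraph_adj_inr_inl, not_toGraph_adj_inl_inl,
        not_toGraph_adj_inr_inr] at huv
    · exact hE' i j' huv
    · exact (hE' i' j huv).symm
  have hsurj' : Function.Surjective (Sum.elim g h) := fun l =>
    (hsurj l).elim (fun ⟨i, hi⟩ => ⟨inl i, hi⟩) fun ⟨j, hj⟩ => ⟨inr j, hj⟩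
  have hinduce : ∀ l, (toGraph E').induce (Sum.elim g h ⁻¹' {l}) =
      (toGraph E).induce (Sum.elim g h ⁻¹' {l}) := by
    intro l
    ext ⟨i | j, hu⟩ ⟨i' | j', hv⟩ <;>
      simp only [Set.mem_preimage, Set.mem_singleton_iff, elim_inl, elim_inr] at hu hv <;>
      simp only [induce_adj, toGraph_adj_inl_inr, toGraph_adj_inr_inl, not_toGraph_adj_inl_inl,
        not_toGraph_adj_inr_inr]
    · exact hagree i j' (hu.trans hv.symm)
    · exact hagree i' j (hv.trans hu.symm)
  have hfiber : ∀ l, Sum.elim g h ⁻¹' {l} =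
      inl '' ↑(univ.filter (g · = l)) ∪ inr '' ↑(univ.filter (h · = l)) := by
    intro l
    ext (i | j) <;> simp
  have hcard := card_connectedComponent_eq_card_iff hf hsurj'
  rw [Fintype.card_fin] at hcard
  rw [numComponents, hcard]
  refine forall_congr' fun l => ?_
  rw [hinduce, hfiber, InducedConnected]

variable {C₁ : Finset (Fin m)} {C₂ : Finset (Fin n)} {a : Fin m}

theorem numComponents_eq_two_iff_of_isIndepPair (hind : IsIndepPair E C₁ C₂)
    (hC₁ : C₁.Nonempty) (hC₂ : C₂.Nonempty) :
    numComponents (fun i j => E i j ∧ (i ∈ C₁ ∨ j ∈ C₂)) = 2 ↔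
      InducedConnected E C₁ C₂ᶜ ∧ InducedConnected E C₁ᶜ C₂ := by
  rw [numComponents_eq_iff_forall_inducedConnected (E := E)
    (fun i => if i ∈ C₁ then 0 else 1) (fun j => if j ∈ C₂ then 1 else 0)]
  · simp only [Fin.isValue, ite_eq_iff, Fin.forall_fin_two, and_true, one_ne_zero, and_false,
      or_false, subset_univ, filter_mem_eq_of_subset, false_or, zero_ne_one]
    congr! 2 <;> ext <;> simp
  · rintro i j ⟨hij, hor⟩
    by_cases hi : i ∈ C₁
    · have hj : j ∉ C₂ := fun hj => hind i hi j hj hij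
      simp [hi, hj]
    · simp [hi, hor.resolve_left hi]
  · intro i j hl
    by_cases hi : i ∈ C₁ <;> by_cases hj : j ∈ C₂ <;> simp_all
  · obtain ⟨⟨x, hx⟩, ⟨y, hy⟩⟩ := And.intro hC₁ hC₂
    intro l
    fin_cases l
    · exact Or.inl ⟨x, by simp [hx]⟩
    · exact Or.inr ⟨y, by simp [hy]⟩

theorem numComponents_erase_eq_three_iff_of_isIndepPair (hind : IsIndepPair E C₁ C₂)
    (hC₂ : C₂.Nonempty) (hC₂' : C₂ ≠ univ) :
    numComponents (fun i j => E i j ∧ i ≠ a ∧ (i ∈ C₁ ∨ j ∈ C₂)) = 3 ↔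
      InducedConnected E (C₁.erase a) C₂ᶜ ∧ InducedConnected E (C₁ᶜ.erase a) C₂ := by
  rw [numComponents_eq_iff_forall_inducedConnected (E := E)
    (fun i => if i = a then 0 else if i ∈ C₁ then 1 else 2) (fun j => if j ∈ C₂ then 2 else 1)]
  · simp only [Fin.isValue, ite_eq_iff, Fin.forall_fin_succ, and_true, one_ne_zero, and_false,
      Fin.reduceEq, or_self, or_false, filter_eq', mem_univ, ↓reduceIte, filter_false,
      inducedConnected_singleton_empty, Fin.succ_zero_eq_one, zero_ne_one, false_or,
      Fin.succ_one_eq_two, subset_univ, filter_mem_eq_of_subset, IsEmpty.forall_iff, true_and]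
    congr! 2 <;> ext <;> simp
  · rintro i j ⟨hij, hia, hor⟩
    by_cases hi : i ∈ C₁
    · have hj : j ∉ C₂ := fun hj => hind i hi j hj hij
      simp [hia, hi, hj]
    · simp [hia, hi, hor.resolve_left hi]
  · intro i j hl
    by_cases ha : i = a <;> by_cases hi : i ∈ C₁ <;> by_cases hj : j ∈ C₂ <;> simp_all
  · obtain ⟨y, hy⟩ := hC₂
    obtain ⟨z, hz⟩ : ∃ z, z ∉ C₂ := by simpa [eq_univ_iff_forall] using hC₂'
    intro l
    fin_cases l
    · exact Or.inl ⟨a, by simp⟩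
    · exact Or.inr ⟨z, by simp [hz]⟩
    · exact Or.inr ⟨y, by simp [hy]⟩

theorem InIStar.twoSidedMaxIndep (hC : InIStar E C₁ C₂) (hC₁ : C₁.Nonempty)
    (hC₂ : C₂.Nonempty) : TwoSidedMaxIndep E C₁ C₂ := by
  rcases hC with h | ⟨h, -⟩ | ⟨h, -⟩
  · exact h
  · exact absurd h hC₂.ne_empty
  · exact absurd h hC₁.ne_empty

variable [∀ i j, Decidable (E i j)]

theorem TwoSidedMaxIndep.nbrL_eq_compl (hC : TwoSidedMaxIndep E C₁ C₂) :
    nbrL E C₂ = C₁ᶜ := by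
  obtain ⟨⟨-, -, -, -, hind⟩, hmax⟩ := hC
  ext i
  simp only [nbrL, mem_filter, mem_univ, true_and, mem_compl]
  refine ⟨fun ⟨j, hj, hij⟩ hi => hind i hi j hj hij, fun hi => ?_⟩
  by_contra! hno
  have hind' : IsIndepPair E (insert i C₁) C₂ := by
    intro i' hi' j hj
    rcases mem_insert.mp hi' with rfl | hi'
    · exact hno j hj
    · exact hind i' hi' j hj
  exact hi ((hmax _ _ hind' (subset_insert _ _) subset_rfl).1 ▸ mem_insert_self i C₁)

theorem TwoSidedMaxIndep.nbrR_eq_compl (hC : TwoSidedMaxIndep E C₁ C₂) :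
    nbrR E C₁ = C₂ᶜ := by
  obtain ⟨⟨-, -, -, -, hind⟩, hmax⟩ := hC
  ext j
  simp only [nbrR, mem_filter, mem_univ, true_and, mem_compl]
  refine ⟨fun ⟨i, hi, hij⟩ hj => hind i hi j hj hij, fun hj => ?_⟩
  by_contra! hno
  have hind' : IsIndepPair E C₁ (insert j C₂) := by
    intro i hi j' hj'
    rcases mem_insert.mp hj' with rfl | hj'
    · exact hno i hi
    · exact hind i hi j' hj'
  exact hj ((hmax _ _ hind' subset_rfl (subset_insert _ _)).2 ▸ mem_insert_self j C₂)

/-- Otherwise some `j` is adjacent to `a` alone, and `(U₁ ∖ {a}) ⊔ {j}` would be a two-sided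
independent set containing `U₁ ∖ {a}`. -/
theorem InIStar.nbrR_compl_singleton_eq_univ [Nontrivial (Fin n)] (hA : InIStar E {a}ᶜ ∅) :
    nbrR E {a}ᶜ = univ := by
  rcases hA with ⟨⟨-, -, h, -⟩, -⟩ | ⟨-, hne, -, hnot⟩ | ⟨-, h, -⟩
  · simp at h
  · ext j
    simp only [nbrR, mem_filter, mem_univ, true_and, iff_true]
    by_contra! hno
    refine hnot ⟨{a}ᶜ, {j}, ⟨hne, by simp, singleton_nonempty j, singleton_ne_univ j, ?_⟩,
      subset_rfl⟩
    intro i hi j' hj'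
    rw [mem_singleton.mp hj']
    exact hno i hi
  · simp at h

theorem assoc_compl_singleton_iff (hN : nbrR E {a}ᶜ = univ) {i : Fin m} {j : Fin n} :
    assoc E {a}ᶜ ∅ i j ↔ E i j ∧ i ≠ a := by
  simp [assoc, hN]

theorem assoc_iff_of_nonempty (hC₁ : C₁.Nonempty) (hC₂ : C₂.Nonempty) {i : Fin m} {j : Fin n} :
    assoc E C₁ C₂ i j ↔ E i j ∧ (i ∈ C₁ ∨ j ∈ C₂) := by
  simp [assoc, hC₁.ne_empty, hC₂.ne_empty]

theorem two_face_AC_general (m n : ℕ) (E : Fin m → Fin n → Prop)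
    [∀ i j, Decidable (E i j)]
    (a : Fin m) (hA : FirstIndep E ({a}ᶜ) ∅)
    (C₁ : Finset (Fin m)) (C₂ : Finset (Fin n))
    (hC₁ : C₁.Nonempty) (hC₂ : C₂.Nonempty) (hC : FirstIndep E C₁ C₂) :
    numComponents (fun i j => assoc E ({a}ᶜ) ∅ i j ∧ assoc E C₁ C₂ i j) = 3 ↔
      ((C₁ = {a} ∧ ∃ v, C₂ = {v}ᶜ) ∨
        (a ∉ C₁ ∧ InducedConnected E ((nbrL E C₂).erase a) C₂) ∨
        (a ∉ nbrL E C₂ ∧ InducedConnected E (C₁.erase a) (nbrR E C₁))) := by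
  have hCmax := hC.1.twoSidedMaxIndep hC₁ hC₂
  rw [hCmax.nbrL_eq_compl, hCmax.nbrR_eq_compl]
  obtain ⟨⟨-, -, -, hC₂', hind⟩, -⟩ := hCmax
  have : Nontrivial (Fin n) := by
    obtain ⟨y, hy⟩ := hC₂
    obtain ⟨z, hz⟩ : ∃ z, z ∉ C₂ := by simpa [eq_univ_iff_forall] using hC₂'
    exact ⟨y, z, ne_of_mem_of_not_mem hy hz⟩
  have hN := hA.1.nbrR_compl_singleton_eq_univ
  have hGC : assoc E C₁ C₂ = fun i j => E i j ∧ (i ∈ C₁ ∨ j ∈ C₂) := by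
    funext i j
    exact propext (assoc_iff_of_nonempty hC₁ hC₂)
  have hGAC : (fun i j => assoc E {a}ᶜ ∅ i j ∧ assoc E C₁ C₂ i j) =
      fun i j => E i j ∧ i ≠ a ∧ (i ∈ C₁ ∨ j ∈ C₂) := by
    funext i j
    rw [assoc_compl_singleton_iff hN, hGC]
    exact propext (by tauto)
  obtain ⟨hconn₁, hconn₂⟩ :=
    (numComponents_eq_two_iff_of_isIndepPair hind hC₁ hC₂).1 (hGC ▸ hC.2)
  rw [hGAC, numComponents_erase_eq_three_iff_of_isIndepPair hind hC₂ hC₂']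
  by_cases ha : a ∈ C₁
  · rw [erase_eq_of_notMem (notMem_compl.mpr ha)]
    simp only [ha, hconn₂, notMem_compl, not_true_eq_false, false_or, true_and,
      and_true]
    refine ⟨Or.inr, ?_⟩
    rintro (⟨rfl, v, rfl⟩ | h)
    · simpa using inducedConnected_empty_singleton v
    · exact h
  · have hC₁a : C₁ ≠ {a} := by rintro rfl; simp at ha
    rw [erase_eq_of_notMem ha]
    simp [ha, hconn₁, hC₁a]

/-- Let `A = U₁ ∖ {a}` be a first independent set and `C = C₁ ⊔ C₂` a
two-sided first independent set of a connected bipartite graph `G ⊆ K_{m,n}`. Then the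
intersection subgraph `G{A} ∩ G{C}` has exactly three connected components
(equivalently, the corresponding pair of extremal rays spans a 2-face of the edge cone)
if and only if one of the following holds:
(1) `C₁ = {a}` and `C₂ = U₂ ∖ {v}` for some `v`;
(2) `C₁ ⊆ U₁ ∖ {a}` and `G[C₂ ⊔ (N(C₂) ∖ {a})]` is connected;
(3) `N(C₂) ⊆ U₁ ∖ {a}` and `G[(C₁ ∖ {a}) ⊔ N(C₁)]` is connected. -/
theorem two_face_AC (m n : ℕ) (E : Fin m → Fin n → Prop)
    [∀ i j, Decidable (E i j)] (hconn : (toGraph E).Connected)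
    (a : Fin m) (hA : FirstIndep E ({a}ᶜ) ∅)
    (C₁ : Finset (Fin m)) (C₂ : Finset (Fin n))
    (hC₁ : C₁.Nonempty) (hC₂ : C₂.Nonempty) (hC : FirstIndep E C₁ C₂) :
    numComponents (fun i j => assoc E ({a}ᶜ) ∅ i j ∧ assoc E C₁ C₂ i j) = 3 ↔
      ((C₁ = {a} ∧ ∃ v, C₂ = {v}ᶜ) ∨
        (a ∉ C₁ ∧ InducedConnected E ((nbrL E C₂).erase a) C₂) ∨
        (a ∉ nbrL E C₂ ∧ InducedConnected E (C₁.erase a) (nbrR E C₁))) :=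
  two_face_AC_general m n E a hA C₁ C₂ hC₁ hC₂ hC

end ToricBipartite
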